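/- Let π : M → N be a proper surjective continuous open map between topological spaces with N connected and locally connected, and suppose π has finite fibers. Then for every connected component C of M, the image π(C) is open and closed in N; in particular if M has finitely many connected components, at least one of them maps onto N. -/
import Mathlib

open Set

section Aux

variable {M N : Type*} [TopologicalSpace M] [TopologicalSpace N]

/-- The quasicomponent of a point: intersection of all clopen sets containing it. -/
private def quasiComp (x : M) : Set M := ⋂₀ {Z : Set M | IsClopen Z ∧ x ∈ Z}

private lemma mem_quasiComp_iff {x a : M} :
    a ∈ quasiComp x ↔ ∀ Z : Set M, IsClopen Z → x ∈ Z → a ∈ Z := by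
  simp [quasiComp, Set.mem_sInter, and_imp]

private lemma self_mem_quasiComp (x : M) : x ∈ quasiComp x :=
  mem_quasiComp_iff.2 fun _ _ hx => hx

private lemma quasiComp_symm {x a : M} (h : a ∈ quasiComp x) : x ∈ quasiComp a := by
  rw [mem_quasiComp_iff] at h ⊢
  intro Z hZ ha
  by_contra hx
  exact (h Zᶜ hZ.compl hx) ha

private lemma quasiComp_eq_of_mem {x a : M} (h : a ∈ quasiComp x) :
    quasiComp a = quasiComp x := by
  apply Set.Subset.antisymm
  · intro b hb
    rw [mem_quasiComp_iff] at h hb ⊢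
    exact fun Z hZ hx => hb Z hZ (h Z hZ hx)
  · intro b hb
    have hx : x ∈ quasiComp a := quasiComp_symm h
    rw [mem_quasiComp_iff] at hx hb ⊢
    exact fun Z hZ ha => hb Z hZ (hx Z hZ ha)

private lemma isClosed_quasiComp (x : M) : IsClosed (quasiComp x) := by
  apply isClosed_sInter
  rintro Z ⟨hZ, -⟩
  exact hZ.1

variable [ConnectedSpace N] {π : M → N}

/-- Any nonempty clopen set maps onto `N`. -/
private lemma clopen_image_univ (hproper : IsProperMap π) (hopen : IsOpenMap π) {Z : Set M} (hZ : IsClopen Z) (hne : Z.Nonempty) :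
    π '' Z = univ := by
  have h : IsClopen (π '' Z) := ⟨hproper.isClosedMap Z hZ.1, hopen Z hZ.2⟩
  exact h.eq_univ (hne.image π)

/-- The quasicomponent of any point meets every fiber. -/
private lemma quasiComp_meets_fiber (hproper : IsProperMap π) (hopen : IsOpenMap π)
    (hfin : ∀ y : N, (π ⁻¹' {y}).Finite) (x : M) (y : N) :
    ∃ a : M, a ∈ quasiComp x ∧ π a = y := by
  classical
  set F : Set M := π ⁻¹' {y} with hF
  have hFfin : F.Finite := hfin y
  -- every clopen set containing x meets F
  have hmeet : ∀ Z : Set M, IsClopen Z → x ∈ Z → (Z ∩ F).Nonempty := by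
    intro Z hZ hx
    have : y ∈ π '' Z := by
      rw [clopen_image_univ hproper hopen hZ ⟨x, hx⟩]; trivial
    obtain ⟨a, haZ, ha⟩ := this
    exact ⟨a, haZ, by simp [hF, ha]⟩
  -- pick a clopen set containing x minimizing the cardinality of intersection with F
  set T : Set ℕ := {n | ∃ Z : Set M, IsClopen Z ∧ x ∈ Z ∧ (Z ∩ F).ncard = n} with hT
  have hTne : T.Nonempty := ⟨(univ ∩ F).ncard, univ, isClopen_univ, mem_univ x, rfl⟩
  obtain ⟨Z₀, hZ₀, hxZ₀, hmin⟩ : ∃ Z₀ : Set M, IsClopen Z₀ ∧ x ∈ Z₀ ∧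
      (Z₀ ∩ F).ncard = sInf T := by
    obtain ⟨Z₀, h1, h2, h3⟩ := Nat.sInf_mem hTne
    exact ⟨Z₀, h1, h2, h3⟩
  -- the minimal intersection is contained in every clopen set containing x
  have hsub : ∀ Z : Set M, IsClopen Z → x ∈ Z → Z₀ ∩ F ⊆ Z := by
    intro Z hZ hx'
    have h1 : ((Z₀ ∩ Z) ∩ F) ⊆ Z₀ ∩ F := by
      intro a ⟨⟨h, _⟩, hf⟩; exact ⟨h, hf⟩
    have hle : (Z₀ ∩ F).ncard ≤ ((Z₀ ∩ Z) ∩ F).ncard := by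
      rw [hmin]
      exact Nat.sInf_le ⟨Z₀ ∩ Z, hZ₀.inter hZ, ⟨hxZ₀, hx'⟩, rfl⟩
    have heq : (Z₀ ∩ Z) ∩ F = Z₀ ∩ F :=
      Set.eq_of_subset_of_ncard_le h1 hle (hFfin.subset (Set.inter_subset_right))
    intro a ha
    rw [← heq] at ha
    exact ha.1.2
  obtain ⟨a, haZ₀, haF⟩ := hmeet Z₀ hZ₀ hxZ₀
  refine ⟨a, mem_quasiComp_iff.2 fun Z hZ hx' => hsub Z hZ hx' ⟨haZ₀, haF⟩, haF⟩

/-- Quasicomponents are open. -/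
private lemma isOpen_quasiComp (hproper : IsProperMap π) (hopen : IsOpenMap π)
    (hfin : ∀ y : N, (π ⁻¹' {y}).Finite) (x : M) :
    IsOpen (quasiComp x) := by
  classical
  have hy : Nonempty N := inferInstance
  obtain ⟨y₀⟩ := hy
  set F : Set M := π ⁻¹' {y₀} with hF
  have hFfin : F.Finite := hfin y₀
  have hcompl : (quasiComp x)ᶜ = ⋃ a ∈ {a ∈ F | a ∉ quasiComp x}, quasiComp a := by
    apply Set.Subset.antisymm
    · intro z hz
      obtain ⟨a, haq, hay⟩ := quasiComp_meets_fiber hproper hopen hfin z y₀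
      have haz : quasiComp a = quasiComp z := quasiComp_eq_of_mem haq
      have hanx : a ∉ quasiComp x := by
        intro hax
        have : quasiComp a = quasiComp x := quasiComp_eq_of_mem hax
        exact hz (by rw [← this, haz]; exact self_mem_quasiComp z)
      exact Set.mem_biUnion ⟨by simp [hF, hay], hanx⟩ (by rw [haz]; exact self_mem_quasiComp z)
    · rintro z hz
      simp only [Set.mem_iUnion] at hz
      obtain ⟨a, ⟨haF, hanx⟩, hza⟩ := hz
      intro hzx
      have h1 : quasiComp z = quasiComp a := quasiComp_eq_of_mem hza
      have h2 : quasiComp z = quasiComp x := quasiComp_eq_of_mem hzx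
      have h3 : a ∈ quasiComp z := quasiComp_symm hza
      rw [h2] at h3
      exact hanx h3
  rw [← isClosed_compl_iff, hcompl]
  exact Set.Finite.isClosed_biUnion (hFfin.sep _) fun a _ => isClosed_quasiComp a

/-- A clopen quasicomponent is preconnected. -/
private lemma quasiComp_connected (hproper : IsProperMap π) (hopen : IsOpenMap π)
    (hfin : ∀ y : N, (π ⁻¹' {y}).Finite) (x : M) :
    IsPreconnected (quasiComp x) := by
  have hclopen : IsClopen (quasiComp x) :=
    ⟨isClosed_quasiComp x, isOpen_quasiComp hproper hopen hfin x⟩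
  intro U V hU hV hcov ⟨u, huQ, huU⟩ ⟨v, hvQ, hvV⟩
  by_contra hdisj
  rw [Set.not_nonempty_iff_eq_empty] at hdisj
  have hdisj' : ∀ b, b ∈ quasiComp x → b ∈ U → b ∈ V → False := by
    intro b hb h1 h2
    have hmem : b ∈ quasiComp x ∩ (U ∩ V) := ⟨hb, h1, h2⟩
    rw [hdisj] at hmem
    exact hmem
  have hQU : IsClopen (quasiComp x ∩ U) := by
    constructor
    · have heq : quasiComp x ∩ U = quasiComp x \ V := by
        apply Set.Subset.antisymm
        · rintro a ⟨haQ, haU⟩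
          exact ⟨haQ, fun haV => hdisj' a haQ haU haV⟩
        · rintro a ⟨haQ, haV⟩
          rcases hcov haQ with h | h
          · exact ⟨haQ, h⟩
          · exact absurd h haV
      rw [heq]
      exact (isClosed_quasiComp x).sdiff hV
    · exact hclopen.2.inter hU
  have hQV : IsClopen (quasiComp x ∩ V) := by
    constructor
    · have heq : quasiComp x ∩ V = quasiComp x \ U := by
        apply Set.Subset.antisymm
        · rintro a ⟨haQ, haV⟩
          exact ⟨haQ, fun haU => hdisj' a haQ haU haV⟩
        · rintro a ⟨haQ, haU⟩
          rcases hcov haQ with h | h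
          · exact absurd h haU
          · exact ⟨haQ, h⟩
      rw [heq]
      exact (isClosed_quasiComp x).sdiff hU
    · exact hclopen.2.inter hV
  rcases hcov (self_mem_quasiComp x) with hx | hx
  · have hsub : quasiComp x ⊆ quasiComp x ∩ U := fun a ha =>
      mem_quasiComp_iff.1 ha _ hQU ⟨self_mem_quasiComp x, hx⟩
    exact hdisj' v hvQ (hsub hvQ).2 hvV
  · have hsub : quasiComp x ⊆ quasiComp x ∩ V := fun a ha =>
      mem_quasiComp_iff.1 ha _ hQV ⟨self_mem_quasiComp x, hx⟩
    exact hdisj' u huQ huU (hsub huQ).2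

/-- The quasicomponent equals the connected component. -/
private lemma quasiComp_eq_connectedComponent (hproper : IsProperMap π) (hopen : IsOpenMap π)
    (hfin : ∀ y : N, (π ⁻¹' {y}).Finite) (x : M) :
    quasiComp x = connectedComponent x := by
  apply Set.Subset.antisymm
  · exact IsPreconnected.subset_connectedComponent
      (quasiComp_connected hproper hopen hfin x) (self_mem_quasiComp x)
  · intro a ha
    rw [mem_quasiComp_iff]
    intro Z hZ hx
    exact hZ.connectedComponent_subset hx ha

/-- Every connected component maps onto `N`. -/
private lemma image_connectedComponent_univ (hproper : IsProperMap π) (hopen : IsOpenMap π)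
    (hfin : ∀ y : N, (π ⁻¹' {y}).Finite) (x : M) :
    π '' connectedComponent x = univ := by
  apply Set.eq_univ_of_forall
  intro y
  obtain ⟨a, haQ, ha⟩ := quasiComp_meets_fiber hproper hopen hfin x y
  rw [quasiComp_eq_connectedComponent hproper hopen hfin] at haQ
  exact ⟨a, haQ, ha⟩

end Aux

/-- For a proper, surjective, continuous, open map `π : M → N` with finite
fibers, `N` connected and locally connected, the image of every connected component of `M`
is open and closed in `N`; if `M` has finitely many connected components, at least one of
them maps onto `N`. -/
theorem image_connectedComponent_clopen_of_proper_open
    {M N : Type*} [TopologicalSpace M] [TopologicalSpace N]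
    [ConnectedSpace N] [LocallyConnectedSpace N]
    (π : M → N) (hcont : Continuous π) (hproper : IsProperMap π)
    (hopen : IsOpenMap π) (hsurj : Function.Surjective π)
    (hfin : ∀ y : N, (π ⁻¹' {y}).Finite) :
    (∀ x : M, IsOpen (π '' connectedComponent x) ∧ IsClosed (π '' connectedComponent x)) ∧
      ({C : Set M | ∃ x : M, C = connectedComponent x}.Finite →
        ∃ x : M, π '' connectedComponent x = Set.univ) := by
  have key := image_connectedComponent_univ hproper hopen hfin
  constructor
  · intro x
    rw [key x]
    exact ⟨isOpen_univ, isClosed_univ⟩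
  · intro _
    obtain ⟨y₀⟩ : Nonempty N := inferInstance
    obtain ⟨x, -⟩ := hsurj y₀
    exact ⟨x, key x⟩
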